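/- The generating function F(u,v,x) of rooted plane trees with some marked corners incident to inner nodes, such that every node of arity 1 has at least one marked corner (u marking leaves, v marking marked corners, x marking edges), satisfies F = u + x(1+v)²F/(1 − x(1+v)F) − xF. -/

import Mathlib

open MvPolynomial

/-- Rooted plane trees with marked corners: a node carries its list of
children and a list of booleans of length (arity + 1) indicating which of its
corners are marked. -/
inductive PTree where
  | node : List PTree → List Bool → PTree

namespace PTree

/-- Number of edges. -/
def edges : PTree → ℕ
  | .node cs _ => cs.length + (cs.attach.map (fun c => edges c.1)).sum
decreasing_by
  have := List.sizeOf_lt_of_mem c.2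
  simp only [PTree.node.sizeOf_spec]; omega

/-- Number of leaves (a single vertex counts as a leaf). -/
def leaves : PTree → ℕ
  | .node cs _ =>
      if cs.isEmpty then 1 else (cs.attach.map (fun c => leaves c.1)).sum
decreasing_by
  have := List.sizeOf_lt_of_mem c.2
  simp only [PTree.node.sizeOf_spec]; omega

/-- Number of marked corners. -/
def markCount : PTree → ℕ
  | .node cs m => m.count true + (cs.attach.map (fun c => markCount c.1)).sum
decreasing_by
  have := List.sizeOf_lt_of_mem c.2
  simp only [PTree.node.sizeOf_spec]; omega

end PTree

/-- Validity for the class `𝓕`: the marks list has length arity + 1, leaves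
carry no marks, and each node of arity 1 has at least one of its two corners
marked (nodes of arity ≥ 2 may have any subset of their corners marked). -/
inductive Valid9 : PTree → Prop
  | node (cs : List PTree) (m : List Bool) :
      m.length = cs.length + 1 →
      (cs = [] → m.count true = 0) →
      (cs.length = 1 → 1 ≤ m.count true) →
      (∀ c ∈ cs, Valid9 c) →
      Valid9 (.node cs m)

/-- `F(u,v,x)`: the generating function of the class, where `u = X 0` marks
leaves, `v = X 1` marks marked corners, and `x` (the power series variable)
marks edges. -/
noncomputable def Fgf : PowerSeries (MvPolynomial (Fin 2) ℚ) :=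
  PowerSeries.mk (fun e =>
    ∑ᶠ T : {T : PTree // Valid9 T ∧ T.edges = e},
      (X 0) ^ T.1.leaves * (X 1) ^ T.1.markCount)

local notation "u" => (PowerSeries.C : MvPolynomial (Fin 2) ℚ →+* PowerSeries (MvPolynomial (Fin 2) ℚ)) (X 0)
local notation "v" => (PowerSeries.C : MvPolynomial (Fin 2) ℚ →+* PowerSeries (MvPolynomial (Fin 2) ℚ)) (X 1)
local notation "x" => (PowerSeries.X : PowerSeries (MvPolynomial (Fin 2) ℚ))

/-!
Let `H` count the trees whose root is an inner node with arbitrarily marked corners and whose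
subtrees are valid, and `G` the valid trees with an inner root. A valid tree is a leaf or counted
by `G`, so `F = u + G`. A tree counted by `H` is counted by `G` unless its root is unary and
unmarked, so `H = G + xF`. Cutting off the first subtree of the root together with its edge and
the first corner gives `H = x(1+v)²F + x(1+v)FH`: a unary root leaves two corners to mark, and
otherwise the rest of the tree is again counted by `H`. Eliminating `G` and `H` gives the claim.
-/

section GenFun

variable {α β R : Type*} [CommSemiring R]

/-- `∑_{a ∈ s} w a * X ^ size a`; only meaningful when every level is finite, since `finsum`
is `0` on infinite sets. -/
noncomputable def genFun (size : α → ℕ) (w : α → R) (s : Set α) : PowerSeries R :=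
  PowerSeries.mk fun n => ∑ᶠ a ∈ {a ∈ s | size a = n}, w a

def FiniteLevels (size : α → ℕ) (s : Set α) : Prop :=
  ∀ n, {a ∈ s | size a ≤ n}.Finite

variable {size : α → ℕ} {w : α → R} {s t : Set α}

theorem coeff_genFun (n : ℕ) :
    PowerSeries.coeff n (genFun size w s) = ∑ᶠ a ∈ {a ∈ s | size a = n}, w a :=
  PowerSeries.coeff_mk _ _

theorem FiniteLevels.finite_eq (hs : FiniteLevels size s) (n : ℕ) :
    {a ∈ s | size a = n}.Finite :=
  (hs n).subset fun _ ha => ⟨ha.1, ha.2.le⟩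

theorem FiniteLevels.mono (ht : FiniteLevels size t) (hst : s ⊆ t) : FiniteLevels size s :=
  fun n => (ht n).subset fun _ ha => ⟨hst ha.1, ha.2⟩

theorem FiniteLevels.prod {size₁ : α → ℕ} {size₂ : β → ℕ} {s : Set α} {t : Set β}
    (hs : FiniteLevels size₁ s) (ht : FiniteLevels size₂ t) :
    FiniteLevels (fun p : α × β => size₁ p.1 + size₂ p.2) (s ×ˢ t) := fun n =>
  ((hs n).prod (ht n)).subset fun _ ⟨⟨h₁, h₂⟩, hn⟩ =>
    ⟨⟨h₁, (Nat.le_add_right _ _).trans hn⟩, h₂, (Nat.le_add_left _ _).trans hn⟩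

theorem genFun_union (hst : Disjoint s t) (h : FiniteLevels size (s ∪ t)) :
    genFun size w (s ∪ t) = genFun size w s + genFun size w t := by
  ext n
  have hlevel : {a ∈ s ∪ t | size a = n} = {a ∈ s | size a = n} ∪ {a ∈ t | size a = n} := by
    ext; simp only [Set.mem_union, Set.mem_ofPred_eq, or_and_right]
  rw [map_add, coeff_genFun, coeff_genFun, coeff_genFun, hlevel]
  exact finsum_mem_union (hst.mono (Set.sep_subset _ _) (Set.sep_subset _ _))
    ((h.mono Set.subset_union_left).finite_eq n) ((h.mono Set.subset_union_right).finite_eq n)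

theorem genFun_image {size' : β → ℕ} {w' : β → R} {g : β → α} {s : Set β} (hg : s.InjOn g)
    (hsize : ∀ b ∈ s, size (g b) = size' b) (hw : ∀ b ∈ s, w (g b) = w' b) :
    genFun size w (g '' s) = genFun size' w' s := by
  ext n
  have hlevel : {a ∈ g '' s | size a = n} = g '' {b ∈ s | size' b = n} := by
    ext a
    constructor
    · rintro ⟨⟨b, hb, rfl⟩, hn⟩
      exact ⟨b, ⟨hb, (hsize b hb).symm.trans hn⟩, rfl⟩
    · rintro ⟨b, ⟨hb, hn⟩, rfl⟩
      exact ⟨⟨b, hb, rfl⟩, (hsize b hb).trans hn⟩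
  rw [coeff_genFun, coeff_genFun, hlevel, finsum_mem_image (hg.mono (Set.sep_subset _ _))]
  exact finsum_mem_congr rfl fun b hb => hw b hb.1

theorem genFun_add_one :
    genFun (fun a => size a + 1) w s = PowerSeries.X * genFun size w s := by
  ext n
  cases n with
  | zero => simp [coeff_genFun]
  | succ n => rw [PowerSeries.coeff_succ_X_mul, coeff_genFun, coeff_genFun]; simp

theorem genFun_singleton (a : α) :
    genFun size w {a} = PowerSeries.monomial (size a) (w a) := by
  ext n
  rw [coeff_genFun, PowerSeries.coeff_monomial]
  split_ifs with h
  · subst h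
    rw [show {b ∈ ({a} : Set α) | size b = size a} = {a} by ext; simp +contextual,
      finsum_mem_singleton]
  · rw [show {b ∈ ({a} : Set α) | size b = n} = ∅ by ext; simp; grind, finsum_mem_empty]

theorem genFun_size_zero : genFun (fun _ => 0) w s = PowerSeries.C (∑ᶠ a ∈ s, w a) := by
  ext n
  rw [coeff_genFun, PowerSeries.coeff_C]
  cases n <;> simp

theorem finsum_mem_prod_mul {s : Set α} {t : Set β} (f : α → R) (g : β → R)
    (hs : s.Finite) (ht : t.Finite) :
    ∑ᶠ p ∈ s ×ˢ t, f p.1 * g p.2 = (∑ᶠ a ∈ s, f a) * ∑ᶠ b ∈ t, g b := by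
  lift s to Finset α using hs
  lift t to Finset β using ht
  rw [← Finset.coe_product, finsum_mem_coe_finset, finsum_mem_coe_finset, finsum_mem_coe_finset,
    Finset.sum_mul_sum, Finset.sum_product]

theorem genFun_prod {size₁ : α → ℕ} {size₂ : β → ℕ} {w₁ : α → R} {w₂ : β → R}
    {s : Set α} {t : Set β} (hs : FiniteLevels size₁ s) (ht : FiniteLevels size₂ t) :
    genFun (fun p : α × β => size₁ p.1 + size₂ p.2) (fun p => w₁ p.1 * w₂ p.2) (s ×ˢ t) =
      genFun size₁ w₁ s * genFun size₂ w₂ t := by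
  ext n
  have hlevel : {p ∈ s ×ˢ t | size₁ p.1 + size₂ p.2 = n} =
      ⋃ q ∈ (Finset.HasAntidiagonal.antidiagonal n : Set (ℕ × ℕ)),
        {a ∈ s | size₁ a = q.1} ×ˢ {b ∈ t | size₂ b = q.2} := by
    ext p
    simp only [Set.mem_ofPred_eq, Set.mem_prod, Set.mem_iUnion, Finset.mem_coe,
      Finset.HasAntidiagonal.mem_antidiagonal, exists_prop, Prod.exists]
    constructor
    · rintro ⟨⟨h₁, h₂⟩, hn⟩
      exact ⟨_, _, hn, ⟨h₁, rfl⟩, h₂, rfl⟩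
    · rintro ⟨i, j, hn, ⟨h₁, rfl⟩, h₂, rfl⟩
      exact ⟨⟨h₁, h₂⟩, hn⟩
  have hdisj : (Finset.HasAntidiagonal.antidiagonal n : Set (ℕ × ℕ)).PairwiseDisjoint
      fun q => {a ∈ s | size₁ a = q.1} ×ˢ {b ∈ t | size₂ b = q.2} :=
    fun q _ q' _ hne => Set.disjoint_left.mpr fun p hp hp' =>
      hne (Prod.ext (hp.1.2.symm.trans hp'.1.2) (hp.2.2.symm.trans hp'.2.2))
  rw [coeff_genFun, hlevel, finsum_mem_biUnion hdisj (Finset.finite_toSet _)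
    fun q _ => (hs.finite_eq q.1).prod (ht.finite_eq q.2), finsum_mem_coe_finset,
    PowerSeries.coeff_mul]
  refine Finset.sum_congr rfl fun q _ => ?_
  rw [coeff_genFun, coeff_genFun]
  exact finsum_mem_prod_mul w₁ w₂ (hs.finite_eq q.1) (ht.finite_eq q.2)

end GenFun

theorem List.finite_setOf_forall_mem_length_le {α : Type*} {s : Set α} (hs : s.Finite) (k : ℕ) :
    {l : List α | (∀ a ∈ l, a ∈ s) ∧ l.length ≤ k}.Finite := by
  have := hs.to_subtype
  refine ((List.finite_length_le s k).image (List.map Subtype.val)).subset ?_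
  rintro l ⟨hl, hk⟩
  lift l to List s using hl
  exact ⟨l, by simpa using hk, rfl⟩

namespace PTree

def children : PTree → List PTree
  | .node cs _ => cs

def marks : PTree → List Bool
  | .node _ m => m

def unary (b₁ b₂ : Bool) (c : PTree) : PTree := node [c] [b₁, b₂]

def graft (b : Bool) (c : PTree) : PTree → PTree
  | .node cs m => .node (c :: cs) (b :: m)

noncomputable def weight (T : PTree) : MvPolynomial (Fin 2) ℚ :=
  X 0 ^ T.leaves * X 1 ^ T.markCount

theorem edges_node (cs : List PTree) (m : List Bool) :
    (node cs m).edges = cs.length + (cs.map edges).sum := by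
  rw [edges, List.attach_map_val]

theorem leaves_node_nil (m : List Bool) : (node [] m).leaves = 1 := by
  rw [leaves]; rfl

theorem leaves_node {cs : List PTree} (m : List Bool) (h : cs ≠ []) :
    (node cs m).leaves = (cs.map leaves).sum := by
  rw [leaves, List.attach_map_val]; simp [h]

theorem markCount_node (cs : List PTree) (m : List Bool) :
    (node cs m).markCount = m.count true + (cs.map markCount).sum := by
  rw [markCount, List.attach_map_val]

theorem edges_lt_of_mem_children {T c : PTree} (hc : c ∈ T.children) : c.edges < T.edges := by
  obtain ⟨cs, m⟩ := T
  rw [edges_node]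
  have := List.le_sum_of_mem (List.mem_map_of_mem (f := edges) hc)
  have := List.length_pos_of_mem hc
  simp only [children] at *
  omega

theorem length_children_le_edges (T : PTree) : T.children.length ≤ T.edges := by
  obtain ⟨cs, m⟩ := T
  rw [edges_node]
  exact Nat.le_add_right _ _

theorem weight_leaf : (node [] [false]).weight = X 0 := by
  simp [weight, leaves_node_nil, markCount_node]

theorem edges_unary (b₁ b₂ : Bool) (c : PTree) : (unary b₁ b₂ c).edges = c.edges + 1 := by
  simp [unary, edges_node, add_comm]

theorem weight_unary (b₁ b₂ : Bool) (c : PTree) :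
    (unary b₁ b₂ c).weight = X 1 ^ b₁.toNat * (X 1 ^ b₂.toNat * c.weight) := by
  rw [unary, weight, weight, leaves_node _ (List.cons_ne_nil _ _), markCount_node]
  cases b₁ <;> cases b₂ <;> simp [pow_add] <;> ring

theorem unary_injective :
    Function.Injective fun p : Bool × Bool × PTree => unary p.1 p.2.1 p.2.2 := by
  rintro ⟨b₁, b₂, c⟩ ⟨b₁', b₂', c'⟩ h
  simp_all [unary]

theorem graft_injective :
    Function.Injective fun p : Bool × PTree × PTree => graft p.1 p.2.1 p.2.2 := by
  rintro ⟨b, c, ⟨cs, m⟩⟩ ⟨b', c', ⟨cs', m'⟩⟩ h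
  simp_all [graft]

theorem edges_graft (b : Bool) (c T : PTree) : (graft b c T).edges = c.edges + T.edges + 1 := by
  obtain ⟨cs, m⟩ := T
  simp only [graft, edges_node, List.length_cons, List.map_cons, List.sum_cons]
  omega

theorem weight_graft (b : Bool) (c : PTree) {T : PTree} (hT : T.children ≠ []) :
    (graft b c T).weight = X 1 ^ b.toNat * (c.weight * T.weight) := by
  obtain ⟨cs, m⟩ := T
  simp only [children] at hT
  rw [graft, weight, weight, weight, leaves_node _ (List.cons_ne_nil _ _), leaves_node _ hT,
    markCount_node, markCount_node]
  cases b <;> simp [pow_add] <;> ring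

theorem finite_setOf_edges_le {s t : Set PTree} {n : ℕ} (hs : {c ∈ s | c.edges < n}.Finite)
    (ht : ∀ T ∈ t, T.marks.length = T.children.length + 1 ∧ ∀ c ∈ T.children, c ∈ s) :
    {T ∈ t | T.edges ≤ n}.Finite := by
  refine (((List.finite_setOf_forall_mem_length_le hs n).prod
    (List.finite_length_le Bool (n + 1))).image fun p => node p.1 p.2).subset ?_
  rintro ⟨cs, m⟩ ⟨hT, hn⟩
  obtain ⟨hm, hcs⟩ := ht _ hT
  have hk := (node cs m).length_children_le_edges
  refine ⟨(cs, m), ⟨⟨fun c hc => ⟨hcs c hc, ?_⟩, by simp_all [children]; omega⟩, ?_⟩, rfl⟩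
  · exact (edges_lt_of_mem_children hc).trans_le hn
  · simp_all [children, marks]; omega

end PTree

open PTree Set

theorem valid9_node_iff (cs : List PTree) (m : List Bool) :
    Valid9 (.node cs m) ↔ m.length = cs.length + 1 ∧ (cs = [] → m.count true = 0) ∧
      (cs.length = 1 → 1 ≤ m.count true) ∧ ∀ c ∈ cs, Valid9 c :=
  ⟨fun | .node _ _ h₁ h₂ h₃ h₄ => ⟨h₁, h₂, h₃, h₄⟩, fun ⟨h₁, h₂, h₃, h₄⟩ => .node _ _ h₁ h₂ h₃ h₄⟩

theorem Valid9.length_marks_and_mem_children {T : PTree} (h : Valid9 T) :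
    T.marks.length = T.children.length + 1 ∧ ∀ c ∈ T.children, Valid9 c := by
  cases h; simp_all [children, marks]

/-- The class counted by `H`. -/
def RootRelaxed : PTree → Prop
  | .node cs m => cs ≠ [] ∧ m.length = cs.length + 1 ∧ ∀ c ∈ cs, Valid9 c

theorem RootRelaxed.children_ne_nil {T : PTree} (h : RootRelaxed T) : T.children ≠ [] := by
  obtain ⟨cs, m⟩ := T
  exact h.1

theorem RootRelaxed.length_marks_and_mem_children {T : PTree} (h : RootRelaxed T) :
    T.marks.length = T.children.length + 1 ∧ ∀ c ∈ T.children, Valid9 c := by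
  obtain ⟨cs, m⟩ := T
  exact h.2

theorem finite_setOf_valid9_edges_lt : ∀ n, {T ∈ {T | Valid9 T} | T.edges < n}.Finite
  | 0 => by simp
  | n + 1 => (finite_setOf_edges_le (finite_setOf_valid9_edges_lt n)
      fun _ hT => hT.length_marks_and_mem_children).subset
        fun _ ⟨hT, hn⟩ => ⟨hT, Nat.lt_succ_iff.mp hn⟩

theorem finiteLevels_valid9 : FiniteLevels edges {T | Valid9 T} := fun n =>
  finite_setOf_edges_le (finite_setOf_valid9_edges_lt n)
    fun _ hT => hT.length_marks_and_mem_children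

theorem finiteLevels_rootRelaxed : FiniteLevels edges {T | RootRelaxed T} := fun n =>
  finite_setOf_edges_le (finite_setOf_valid9_edges_lt n)
    fun _ hT => hT.length_marks_and_mem_children

theorem setOf_valid9_eq_union :
    {T | Valid9 T} = {node [] [false]} ∪ {T | Valid9 T ∧ T.children ≠ []} := by
  ext ⟨cs, m⟩
  simp only [mem_ofPred_eq, mem_union, mem_singleton_iff, node.injEq, children, valid9_node_iff]
  constructor
  · rintro ⟨hm, h0, h1, hc⟩
    rcases cs with _ | ⟨c, cs⟩
    · obtain ⟨b, rfl⟩ := List.length_eq_one_iff.mp hm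
      cases b <;> simp_all
    · simp_all
  · rintro (⟨rfl, rfl⟩ | ⟨h, -⟩) <;> simp_all

theorem disjoint_leaf_valid9 : Disjoint {node [] [false]} {T | Valid9 T ∧ T.children ≠ []} := by
  simp [children]

theorem setOf_rootRelaxed_eq_valid9_union :
    {T | RootRelaxed T} = {T | Valid9 T ∧ T.children ≠ []} ∪ unary false false '' {T | Valid9 T} := by
  ext ⟨cs, m⟩
  simp only [RootRelaxed, unary, mem_ofPred_eq, mem_union, mem_image, node.injEq, children,
    valid9_node_iff]
  constructor
  · rintro ⟨hne, hm, hc⟩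
    by_cases h1 : cs.length = 1 → 1 ≤ m.count true
    · exact Or.inl ⟨⟨hm, fun h => absurd h hne, h1, hc⟩, hne⟩
    · right
      push Not at h1
      obtain ⟨c, rfl⟩ := List.length_eq_one_iff.mp h1.1
      obtain ⟨b₁, b₂, rfl⟩ := List.length_eq_two.mp hm
      cases b₁ <;> cases b₂ <;> simp_all
  · rintro (⟨⟨hm, -, -, hc⟩, hne⟩ | ⟨c, hc, rfl, rfl⟩) <;> simp_all

theorem disjoint_valid9_unary :
    Disjoint {T | Valid9 T ∧ T.children ≠ []} (unary false false '' {T | Valid9 T}) := by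
  refine disjoint_left.mpr ?_
  rintro _ ⟨hv, -⟩ ⟨c, -, rfl⟩
  simp [unary, valid9_node_iff] at hv

theorem setOf_rootRelaxed_eq_unary_union_graft :
    {T | RootRelaxed T} =
      (fun p : Bool × Bool × PTree => unary p.1 p.2.1 p.2.2) '' (univ ×ˢ univ ×ˢ {T | Valid9 T}) ∪
      (fun p : Bool × PTree × PTree => graft p.1 p.2.1 p.2.2) ''
        (univ ×ˢ {T | Valid9 T} ×ˢ {T | RootRelaxed T}) := by
  ext T
  simp only [mem_ofPred_eq, mem_union, mem_image, mem_prod, mem_univ, true_and, Prod.exists]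
  constructor
  · obtain ⟨cs, m⟩ := T
    rintro ⟨hne, hm, hc⟩
    obtain ⟨c, cs, rfl⟩ := List.exists_cons_of_ne_nil hne
    obtain ⟨b, m, rfl⟩ := List.exists_cons_of_length_eq_add_one hm
    rcases cs with _ | ⟨c', cs⟩
    · obtain ⟨b', rfl⟩ := List.length_eq_one_iff.mp (by simpa using hm)
      exact Or.inl ⟨b, b', c, hc c (by simp), rfl⟩
    · refine Or.inr ⟨b, c, node (c' :: cs) m, ⟨hc c (by simp), ?_⟩, rfl⟩
      exact ⟨List.cons_ne_nil _ _, by simpa using hm, fun d hd => hc d (by simp [hd])⟩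
  · rintro (⟨b₁, b₂, c, hc, rfl⟩ | ⟨b, c, ⟨cs', m'⟩, ⟨hc, hne, hm, hcs⟩, rfl⟩)
    · simp_all [RootRelaxed, unary]
    · simp_all [RootRelaxed, graft]

theorem disjoint_unary_graft :
    Disjoint
      ((fun p : Bool × Bool × PTree => unary p.1 p.2.1 p.2.2) '' (univ ×ˢ univ ×ˢ {T | Valid9 T}))
      ((fun p : Bool × PTree × PTree => graft p.1 p.2.1 p.2.2) ''
        (univ ×ˢ {T | Valid9 T} ×ˢ {T | RootRelaxed T})) := by
  refine disjoint_left.mpr ?_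
  rintro _ ⟨⟨b₁, b₂, c⟩, -, rfl⟩ ⟨⟨b, c', ⟨cs, m⟩⟩, ⟨-, -, hne, -⟩, h⟩
  simp_all [unary, graft]

theorem Fgf_eq_genFun : Fgf = genFun edges weight {T | Valid9 T} := by
  ext n : 1
  rw [coeff_genFun, Fgf, PowerSeries.coeff_mk]
  exact finsum_set_coe_eq_finsum_mem (f := weight) {T | Valid9 T ∧ T.edges = n}

theorem finiteLevels_univ_bool : FiniteLevels (fun _ : Bool => 0) univ := fun _ => toFinite _

theorem genFun_univ_bool : genFun (fun _ : Bool => 0) (fun b => X 1 ^ b.toNat) univ = 1 + v := by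
  rw [genFun_size_zero, finsum_mem_univ, finsum_eq_sum_of_fintype, Fintype.sum_bool]
  simp [add_comm]

theorem Fgf_eq_add_genFun_inner :
    Fgf = u + genFun edges weight {T | Valid9 T ∧ T.children ≠ []} := by
  rw [Fgf_eq_genFun, setOf_valid9_eq_union, genFun_union disjoint_leaf_valid9
    (setOf_valid9_eq_union ▸ finiteLevels_valid9), genFun_singleton, weight_leaf, edges_node]
  exact congrArg (· + _) (PowerSeries.monomial_zero_eq_C_apply _)

theorem genFun_rootRelaxed_eq_genFun_inner_add :
    genFun edges weight {T | RootRelaxed T} =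
      genFun edges weight {T | Valid9 T ∧ T.children ≠ []} + x * Fgf := by
  rw [setOf_rootRelaxed_eq_valid9_union, genFun_union disjoint_valid9_unary
    (setOf_rootRelaxed_eq_valid9_union ▸ finiteLevels_rootRelaxed), Fgf_eq_genFun,
    ← genFun_add_one]
  exact congrArg _ (genFun_image (fun c _ c' _ h => by simpa [unary] using h)
    (fun c _ => edges_unary _ _ c) fun c _ => by simp [weight_unary])

theorem genFun_unary :
    genFun edges weight
      ((fun p : Bool × Bool × PTree => unary p.1 p.2.1 p.2.2) '' (univ ×ˢ univ ×ˢ {T | Valid9 T})) =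
      x * (1 + v) ^ 2 * Fgf := by
  rw [Fgf_eq_genFun, ← genFun_univ_bool, sq, mul_assoc, mul_assoc,
    ← genFun_prod finiteLevels_univ_bool finiteLevels_valid9,
    ← genFun_prod finiteLevels_univ_bool (finiteLevels_univ_bool.prod finiteLevels_valid9),
    ← genFun_add_one]
  exact genFun_image unary_injective.injOn (fun p _ => by simp [edges_unary])
    fun p _ => weight_unary _ _ _

theorem genFun_graft :
    genFun edges weight
      ((fun p : Bool × PTree × PTree => graft p.1 p.2.1 p.2.2) ''
        (univ ×ˢ {T | Valid9 T} ×ˢ {T | RootRelaxed T})) =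
      x * (1 + v) * Fgf * genFun edges weight {T | RootRelaxed T} := by
  rw [Fgf_eq_genFun, ← genFun_univ_bool, mul_assoc, mul_assoc,
    ← genFun_prod finiteLevels_valid9 finiteLevels_rootRelaxed,
    ← genFun_prod finiteLevels_univ_bool (finiteLevels_valid9.prod finiteLevels_rootRelaxed),
    ← genFun_add_one]
  exact genFun_image graft_injective.injOn (fun p _ => by rw [edges_graft, zero_add])
    fun p hp => weight_graft _ _ hp.2.2.children_ne_nil

theorem genFun_rootRelaxed_eq :
    genFun edges weight {T | RootRelaxed T} =
      x * (1 + v) ^ 2 * Fgf + x * (1 + v) * Fgf * genFun edges weight {T | RootRelaxed T} := by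
  conv_lhs => rw [setOf_rootRelaxed_eq_unary_union_graft]
  rw [genFun_union disjoint_unary_graft
      (setOf_rootRelaxed_eq_unary_union_graft ▸ finiteLevels_rootRelaxed),
    genFun_unary, genFun_graft]

/-- The paper's equation multiplied by its denominator `1 - x(1+v)F`, which has constant term `1`
and hence is invertible. -/
theorem Fgf_eq :
    (1 - x * (1 + v) * Fgf) * Fgf
      = (1 - x * (1 + v) * Fgf) * (u - x * Fgf) + x * (1 + v) ^ 2 * Fgf := by
  linear_combination (1 - x * (1 + v) * Fgf) *
      (Fgf_eq_add_genFun_inner - genFun_rootRelaxed_eq_genFun_inner_add) +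
    genFun_rootRelaxed_eq
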